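/- Let δ be an expansion function and φ a reduction function on L, let p ∈ L be a proper element and let b ∈ L be φ-δ-primary to p. If p·b ≰ φ(p), then b is δ-primary to p. -/

import Mathlib

/-- Compact element of a complete lattice, with the definition of the older Mathlib. -/
def CompleteLattice.IsCompactElement {α : Type*} [CompleteLattice α] (k : α) :=
  ∀ s : Set α, k ≤ sSup s → ∃ t : Finset α, ↑t ⊆ s ∧ k ≤ t.sup id

/-- A multiplicative lattice: a complete lattice with a commutative, associative
multiplication that distributes over arbitrary joins and whose greatest element `1`
is a multiplicative identity.  We also bundle the standing assumptions of the paper: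
`L` is compactly generated, `1` is compact, and products of compact elements are
compact. -/
class MultiplicativeLattice (L : Type*) extends CompleteLattice L, CommMonoid L where
  mul_sSup : ∀ (a : L) (s : Set L), a * sSup s = ⨆ x ∈ s, a * x
  one_eq_top : (1 : L) = ⊤
  compactly_generated : ∀ x : L, ∃ s : Set L,
    (∀ y ∈ s, CompleteLattice.IsCompactElement y) ∧ sSup s = x
  compact_one : CompleteLattice.IsCompactElement (1 : L)
  compact_mul : ∀ a b : L, CompleteLattice.IsCompactElement a →
    CompleteLattice.IsCompactElement b → CompleteLattice.IsCompactElement (a * b)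

variable {L : Type*}

/-- An expansion function on `L`. -/
def IsExpansion [CompleteLattice L] (δ : L → L) : Prop :=
  (∀ a, a ≤ δ a) ∧ ∀ a b : L, a ≤ b → δ a ≤ δ b

/-- A reduction function on `L`. -/
def IsReduction [CompleteLattice L] (φ : L → L) : Prop :=
  ∀ a, φ a ≤ a

/-- `b` is `φ`-`δ`-primary to `p`. -/
def PhiDeltaPrimaryTo [MultiplicativeLattice L] (φ δ : L → L) (b p : L) : Prop :=
  ∀ x : L, x * b ≤ p → ¬ x * b ≤ φ p → x ≤ δ p

/-- `b` is `δ`-primary to `p`. -/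
def DeltaPrimaryTo [MultiplicativeLattice L] (δ : L → L) (b p : L) : Prop :=
  ∀ x : L, x * b ≤ p → x ≤ δ p

/-- `b` is `φ`-prime to `p`. -/
def PhiPrimeTo [MultiplicativeLattice L] (φ : L → L) (b p : L) : Prop :=
  ∀ x : L, x * b ≤ p → ¬ x * b ≤ φ p → x ≤ p

/-- The radical `√q`: the join of all compact elements some positive power of which
lies below `q`.  This is the expansion function `δ₁`. -/
def mlRadical [MultiplicativeLattice L] (q : L) : L :=
  sSup {x : L | CompleteLattice.IsCompactElement x ∧ ∃ n : ℕ, 0 < n ∧ x ^ n ≤ q}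

/-- The function `φ_ω(q) = ⋀_{n ≥ 1} qⁿ`. -/
def phiOmega [MultiplicativeLattice L] (q : L) : L := ⨅ n : ℕ, q ^ (n + 1)

/-- The mlResidual `(a : c)`, the join of all `x` with `x * c ≤ a`. -/
def mlResidual [MultiplicativeLattice L] (a c : L) : L := sSup {x : L | x * c ≤ a}

section

variable [MultiplicativeLattice L]

namespace MultiplicativeLattice

theorem mul_sup (a u v : L) : a * (u ⊔ v) = a * u ⊔ a * v := by
  rw [← sSup_pair, mul_sSup, iSup_pair]

theorem sup_mul (u v a : L) : (u ⊔ v) * a = u * a ⊔ v * a := by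
  simp only [mul_comm _ a, mul_sup]

theorem mul_le_mul_of_le_right {u v : L} (a : L) (huv : u ≤ v) : a * u ≤ a * v := by
  rw [← sup_eq_right.mpr huv, mul_sup]
  exact le_sup_left

theorem mul_le_left (a b : L) : a * b ≤ a :=
  calc a * b ≤ a * 1 := mul_le_mul_of_le_right a (le_top.trans_eq one_eq_top.symm)
    _ = a := mul_one a

end MultiplicativeLattice

end

theorem deltaPrimary_of_phiDeltaPrimary_of_not_le_general [MultiplicativeLattice L]
    (δ φ : L → L)
    (p : L) (b : L)
    (h : PhiDeltaPrimaryTo φ δ b p) (hpb : ¬ p * b ≤ φ p) :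
    DeltaPrimaryTo δ b p := by
  intro x hxb
  by_cases hx : x * b ≤ φ p
  · -- Enlarging `x` by `p` keeps `x * b ≤ p` but escapes `φ p`, since `p * b ≰ φ p`.
    have hle : (x ⊔ p) * b ≤ p := by
      rw [MultiplicativeLattice.sup_mul]
      exact sup_le hxb (MultiplicativeLattice.mul_le_left p b)
    have hnot : ¬ (x ⊔ p) * b ≤ φ p := fun hle' =>
      hpb (le_trans (by rw [MultiplicativeLattice.sup_mul]; exact le_sup_right) hle')
    exact le_sup_left.trans (h _ hle hnot)
  · exact h x hxb hx

theorem deltaPrimary_of_phiDeltaPrimary_of_not_le [MultiplicativeLattice L]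
    (δ φ : L → L) (hδ : IsExpansion δ) (hφ : IsReduction φ)
    (p : L) (hp : p < 1) (b : L)
    (h : PhiDeltaPrimaryTo φ δ b p) (hpb : ¬ p * b ≤ φ p) :
    DeltaPrimaryTo δ b p :=
  deltaPrimary_of_phiDeltaPrimary_of_not_le_general δ φ p b h hpb
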